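/- Let f : D → {0,1} be a partial Boolean function with D ⊆ {0,1}^M, let ε ∈ [0,1/2), and let d ≥ 0 be an integer. The positive one-sided ε-approximate degree of f exceeds d if and only if there exists a function ψ : {0,1}^M → ℝ such that: (1) ψ(x) = 0 for every x ∉ D; (2) ψ has pure high degree d; (3) ‖ψ‖₁ = 1; (4) ∑_{x∈D} ψ(x)f(x) > ε; and (5) ψ(x) ≤ 0 whenever f(x) = 0. -/

import Mathlib

open MvPolynomial
open scoped Classical

noncomputable section

/-- The real value of a Boolean: `1` for `true`, `0` for `false`. -/
def bval (b : Bool) : ℝ := if b then 1 else 0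

/-- Evaluation of a real multilinear polynomial at a Boolean point of `{0,1}^σ`. -/
def pEval {σ : Type*} (p : MvPolynomial σ ℝ) (x : σ → Bool) : ℝ :=
  MvPolynomial.eval (fun i => bval (x i)) p

/-- `p` is a positive one-sided `ε`-approximation of the partial Boolean function `f`
with domain `D`. -/
def OneSidedApproxBy {σ : Type*} (D : Set (σ → Bool)) (f : (σ → Bool) → Bool) (ε : ℝ)
    (p : MvPolynomial σ ℝ) : Prop :=
  (∀ x ∈ D, f x = true → |pEval p x - 1| ≤ ε) ∧ ∀ x ∈ D, f x = false → pEval p x ≤ ε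

/-- The positive one-sided `ε`-approximate degree of the partial Boolean function `f`. -/
noncomputable def odeg {σ : Type*} (D : Set (σ → Bool)) (f : (σ → Bool) → Bool) (ε : ℝ) : ℕ :=
  sInf {d | ∃ p : MvPolynomial σ ℝ, OneSidedApproxBy D f ε p ∧ p.totalDegree = d}

/-- `ψ` has pure high degree `d`: it is orthogonal to every polynomial of degree at most `d`. -/
def PureHighDeg {σ : Type*} [Fintype σ] [DecidableEq σ] (d : ℕ)
    (ψ : (σ → Bool) → ℝ) : Prop :=
  ∀ p : MvPolynomial σ ℝ, p.totalDegree ≤ d → ∑ x : σ → Bool, ψ x * pEval p x = 0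

/-!
Weak duality: if `ψ` is orthogonal to all polynomials of degree at most `d` and `p` is a one-sided
`ε`-approximant of degree at most `d`, then pointwise `ψ x * p x ≥ ψ x * f x - ε * |ψ x|` on `D`
(using `ψ ≤ 0` where `f = 0`), and summing gives `0 ≥ ⟨ψ, f⟩ - ε > 0`.

Strong duality: one-sided approximation is a finite system of linear inequalities
`±(f x - p x) ≤ ε` in the coefficients of `p`. By Farkas' lemma, if it is infeasible then some
nonnegative combination of the inequalities eliminates `p` and reads `0 ≤ -1`; the same
combination of the signed point masses is orthogonal to low-degree polynomials and correlates with
`f` by more than `ε` times its `ℓ¹`-norm, so its `ℓ¹`-normalisation is the required `ψ`.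
Farkas' lemma is Hahn–Banach separation from a finitely generated cone, which is closed by the
conic Carathéodory theorem.
-/

open Function

section Caratheodory
variable {ι 𝕜 E : Type*} [Fintype ι] [Field 𝕜] [LinearOrder 𝕜] [IsStrictOrderedRing 𝕜]
  [AddCommGroup E] [Module 𝕜 E]

theorem exists_nonneg_sum_eq_support_ssubset (v : ι → E) {t : ι → 𝕜} (ht : 0 ≤ t)
    (hdep : ¬LinearIndepOn 𝕜 v (support t)) :
    ∃ t' : ι → 𝕜, 0 ≤ t' ∧ support t' ⊂ support t ∧ ∑ i, t' i • v i = ∑ i, t i • v i := by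
  obtain ⟨s, g, hs, hgs, hg0, hdep⟩ : ∃ (s : Finset ι) (g : ι → 𝕜), (s : Set ι) ⊆ support t ∧
      (∀ i ∉ s, g i = 0) ∧ ∑ i ∈ s, g i • v i = 0 ∧ ∃ i ∈ s, g i ≠ 0 := by
    simpa [linearIndepOn_iff''] using hdep
  wlog hpos : ∃ i ∈ s, 0 < g i generalizing g
  · obtain ⟨i, hi, hgi⟩ := hdep
    refine this (-g) (by simpa using hgs) (by simp [hg0]) ⟨i, hi, by simpa using hgi⟩ ⟨i, hi, ?_⟩
    simpa using (not_lt.1 fun h => hpos ⟨i, hi, h⟩).lt_of_ne hgi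
  obtain ⟨i, hi, hgi⟩ := hpos
  obtain ⟨i₀, hi₀, hmin⟩ := (s.filter (0 < g ·)).exists_min_image (fun j => t j / g j)
    ⟨i, Finset.mem_filter.2 ⟨hi, hgi⟩⟩
  rw [Finset.mem_filter] at hi₀
  set r := t i₀ / g i₀
  have hr : 0 ≤ r := div_nonneg (ht i₀) hi₀.2.le
  have hmem : ∀ j, g j ≠ 0 → j ∈ s := fun j hj => by_contra fun h => hj (hgs j h)
  refine ⟨t - r • g, fun j => ?_, ?_, ?_⟩
  · rcases lt_or_ge 0 (g j) with hgj | hgj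
    · have := hmin j (Finset.mem_filter.2 ⟨hmem j hgj.ne', hgj⟩)
      simpa [sub_nonneg] using (le_div_iff₀ hgj).1 this
    · simpa using (mul_nonpos_of_nonneg_of_nonpos hr hgj).trans (ht j)
  · refine (Set.ssubset_iff_of_subset fun j hj => ?_).2 ⟨i₀, hs hi₀.1, ?_⟩
    · by_contra htj
      have : g j = 0 := by_contra fun h => htj (hs (hmem j h))
      simp_all
    · simp [r, div_mul_cancel₀ _ hi₀.2.ne']
  · have hg : ∑ i, g i • v i = 0 := by
      rwa [← Finset.sum_subset (Finset.subset_univ s) fun j _ hj => by simp [hgs j hj]]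
    simp [sub_smul, Finset.sum_sub_distrib, mul_smul, ← Finset.smul_sum, hg]

/-- **Conic Carathéodory theorem.** -/
theorem exists_nonneg_sum_eq_linearIndepOn_support (v : ι → E) {t : ι → 𝕜} (ht : 0 ≤ t) :
    ∃ t' : ι → 𝕜, 0 ≤ t' ∧ LinearIndepOn 𝕜 v (support t') ∧
      ∑ i, t' i • v i = ∑ i, t i • v i := by
  induction h : (support t).ncard using Nat.strong_induction_on generalizing t with
  | _ n ih =>
    by_cases hind : LinearIndepOn 𝕜 v (support t)
    · exact ⟨t, ht, hind, rfl⟩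
    obtain ⟨t', ht', hlt, hsum⟩ := exists_nonneg_sum_eq_support_ssubset v ht hind
    obtain ⟨t'', ht'', hind'', hsum'⟩ :=
      ih _ (h ▸ Set.ncard_lt_ncard hlt (Set.toFinite _)) ht' rfl
    exact ⟨t'', ht'', hind'', hsum'.trans hsum⟩

end Caratheodory

theorem LinearMap.isClosed_image_of_injOn {E F : Type*} [NormedAddCommGroup E]
    [NormedSpace ℝ E] [NormedAddCommGroup F] [NormedSpace ℝ F] [FiniteDimensional ℝ F]
    (L : F →ₗ[ℝ] E) {W : Submodule ℝ F} (hL : Set.InjOn L W)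
    {A : Set F} (hA : IsClosed A) (hAW : A ⊆ W) : IsClosed (L '' A) := by
  have hemb := (L ∘ₗ W.subtype).isClosedEmbedding_of_injective (LinearMap.ker_eq_bot.2
    fun x y hxy => Subtype.ext (hL x.2 y.2 hxy))
  have := hemb.isClosedMap _ (hA.preimage continuous_subtype_val)
  rwa [LinearMap.coe_comp, Set.image_comp, Submodule.coe_subtype,
    Set.image_preimage_eq_of_subset (by simpa using hAW)] at this

section Farkas
variable {ι E : Type*} [Fintype ι] [NormedAddCommGroup E] [NormedSpace ℝ E]

theorem isClosed_image_linearCombination_nonneg (v : ι → E) :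
    IsClosed (Fintype.linearCombination ℝ v '' Set.Ici 0) := by
  set L := Fintype.linearCombination ℝ v
  have hunion : L '' Set.Ici 0 =
      ⋃ (s : Set ι) (_ : LinearIndepOn ℝ v s),
        L '' (Set.Ici 0 ∩ {t : ι → ℝ | support t ⊆ s}) := by
    ext x
    simp only [Set.mem_image, Set.mem_iUnion, Set.mem_inter_iff, Set.mem_Ici, Set.mem_ofPred_eq]
    constructor
    · rintro ⟨t, ht, rfl⟩
      obtain ⟨t', ht', hind, hsum⟩ := exists_nonneg_sum_eq_linearIndepOn_support v ht
      exact ⟨_, hind, t', ⟨ht', subset_rfl⟩, by simpa [L, Fintype.linearCombination_apply]⟩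
    · rintro ⟨s, -, t, ⟨ht, -⟩, rfl⟩
      exact ⟨t, ht, rfl⟩
  rw [hunion]
  refine isClosed_iUnion_of_finite fun s => isClosed_iUnion_of_finite fun hind => ?_
  let W : Submodule ℝ (ι → ℝ) := Submodule.pi sᶜ fun _ => ⊥
  have hW : (W : Set (ι → ℝ)) = {t : ι → ℝ | support t ⊆ s} := by
    ext t
    simpa [W, Submodule.pi] using forall_congr' fun i => not_imp_comm
  refine L.isClosed_image_of_injOn (W := W) ?_
    (isClosed_Ici.inter (hW ▸ W.closed_of_finiteDimensional)) (hW ▸ Set.inter_subset_right)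
  intro t₁ h₁ t₂ h₂ heq
  have hs : ∀ i ∉ s.toFinset, (t₁ - t₂) i = 0 := fun i hi => by
    simpa using (Submodule.sub_mem W h₁ h₂) i (by simpa using hi)
  have h0 : ∑ i ∈ s.toFinset, (t₁ - t₂) i • v i = 0 := by
    rw [Finset.sum_subset (Finset.subset_univ _) fun i _ hi => by simp [hs i hi]]
    simpa [L, Fintype.linearCombination_apply, sub_smul, sub_eq_zero] using heq
  funext i
  by_cases hi : i ∈ s.toFinset
  · exact sub_eq_zero.1 (linearIndepOn_iff''.1 hind _ _ (by simp) hs h0 i hi)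
  · exact sub_eq_zero.1 (hs i hi)

/-- **Farkas' lemma.** -/
theorem exists_strongDual_of_not_exists_nonneg_sum_eq (v : ι → E) {b : E}
    (hb : ¬∃ t : ι → ℝ, 0 ≤ t ∧ ∑ i, t i • v i = b) :
    ∃ φ : StrongDual ℝ E, (∀ i, 0 ≤ φ (v i)) ∧ φ b < 0 := by
  let C : ProperCone ℝ E :=
    { toSubmodule := (PointedCone.positive ℝ (ι → ℝ)).map (Fintype.linearCombination ℝ v)
      isClosed' := by simpa using isClosed_image_linearCombination_nonneg v }
  have hmem : ∀ x, x ∈ C ↔ ∃ t : ι → ℝ, 0 ≤ t ∧ ∑ i, t i • v i = x := fun x => by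
    simp [C, PointedCone.map, Fintype.linearCombination_apply]
  obtain ⟨φ, hφ, hφb⟩ := C.hyperplane_separation_point (x₀ := b) fun h => hb ((hmem b).1 h)
  refine ⟨φ, fun i => hφ _ ((hmem _).2 ⟨Pi.single i 1, ?_, ?_⟩), hφb⟩
  · simp [Pi.single_nonneg]
  · simp [Pi.single_apply]

end Farkas

section BooleanPolynomials
variable {σ : Type*}

theorem pEval_prod_X (S : Finset σ) (x : σ → Bool) :
    pEval (∏ i ∈ S, X i) x = ∏ i ∈ S, bval (x i) := by
  simp [pEval, map_prod]

theorem bval_pow {b : Bool} {k : ℕ} (hk : k ≠ 0) : bval b ^ k = bval b := by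
  cases b <;> simp [bval, hk]

/-- On the Boolean cube `X i ^ k = X i`, so every polynomial agrees with a multilinear one. -/
theorem pEval_eq_sum_support (p : MvPolynomial σ ℝ) (x : σ → Bool) :
    pEval p x = ∑ m ∈ p.support, coeff m p * pEval (∏ i ∈ m.support, X i) x := by
  refine (eval_eq _ _).trans (Finset.sum_congr rfl fun m _ => ?_)
  rw [pEval_prod_X]
  exact congrArg _ (Finset.prod_congr rfl fun i hi => bval_pow (Finsupp.mem_support_iff.1 hi))

theorem card_support_le_totalDegree {p : MvPolynomial σ ℝ} {m : σ →₀ ℕ} (hm : m ∈ p.support) :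
    m.support.card ≤ p.totalDegree := by
  refine le_trans ?_ (le_totalDegree hm)
  simpa [Finsupp.sum] using Finset.card_nsmul_le_sum m.support m 1
    fun i hi => Nat.one_le_iff_ne_zero.2 (Finsupp.mem_support_iff.1 hi)

theorem totalDegree_sum_smul_prod_X_le {d : ℕ} (c : {S : Finset σ // S.card ≤ d} → ℝ)
    [Fintype σ] : (∑ S, c S • ∏ i ∈ S.1, X i : MvPolynomial σ ℝ).totalDegree ≤ d := by
  refine (totalDegree_finsetSum _ _).trans (Finset.sup_le fun S _ => ?_)
  refine (totalDegree_smul_le _ _).trans ((totalDegree_finsetProd _ _).trans ?_)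
  simpa using S.2

theorem pureHighDeg_of_forall_prod_X [Fintype σ] [DecidableEq σ] {d : ℕ}
    {ψ : (σ → Bool) → ℝ}
    (h : ∀ S : Finset σ, S.card ≤ d → ∑ x, ψ x * pEval (∏ i ∈ S, X i) x = 0) :
    PureHighDeg d ψ := by
  intro p hp
  simp_rw [pEval_eq_sum_support p, Finset.mul_sum]
  rw [Finset.sum_comm]
  refine Finset.sum_eq_zero fun m hm => ?_
  simp_rw [mul_left_comm (ψ _), ← Finset.mul_sum]
  rw [h _ ((card_support_le_totalDegree hm).trans hp), mul_zero]

theorem pEval_prod_ite (z x : σ → Bool) [Fintype σ] :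
    pEval (∏ i, if z i then X i else 1 - X i) x = if x = z then 1 else 0 := by
  have hfactor : ∀ i, eval (fun j => bval (x j)) (if z i then X i else 1 - X i)
      = if x i = z i then 1 else 0 := fun i => by
    cases z i <;> cases hx : x i <;> simp [bval, hx]
  simp only [pEval, map_prod, hfactor, Finset.prod_boole, _root_.funext_iff, Finset.mem_univ,
    true_implies]

theorem exists_pEval_eq [Fintype σ] (g : (σ → Bool) → ℝ) :
    ∃ p : MvPolynomial σ ℝ, ∀ x, pEval p x = g x := by
  refine ⟨∑ z, g z • ∏ i, if z i then X i else 1 - X i, fun x => ?_⟩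
  have hdelta := fun z => pEval_prod_ite z x
  simp only [pEval] at hdelta
  simp [pEval, smul_eval, hdelta]

end BooleanPolynomials

section Duality
variable {σ : Type*} {D : Set (σ → Bool)} {f : (σ → Bool) → Bool} {ε : ℝ} {d : ℕ}

theorem sub_mul_abs_le_mul_pEval {p : MvPolynomial σ ℝ} (hp : OneSidedApproxBy D f ε p)
    {ψ : (σ → Bool) → ℝ} {x : σ → Bool} (hD : x ∉ D → ψ x = 0)
    (hsign : x ∈ D → f x = false → ψ x ≤ 0) :
    (if x ∈ D then ψ x * bval (f x) else 0) - ε * |ψ x| ≤ ψ x * pEval p x := by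
  by_cases hx : x ∈ D
  · rw [if_pos hx]
    cases hfx : f x
    · have h1 := hp.2 x hx hfx
      have h2 := hsign hx hfx
      simp only [bval, Bool.false_eq_true, if_false, mul_zero, zero_sub, abs_of_nonpos h2]
      nlinarith
    · have h1 := abs_le.1 (hp.1 x hx hfx)
      simp only [bval, if_true]
      rcases le_total 0 (ψ x) with h | h
      · rw [abs_of_nonneg h]; nlinarith
      · rw [abs_of_nonpos h]; nlinarith
  · simp [hx, hD hx]

variable (D f) in
/-- The linear constraints of one-sided approximation: `inl x` is `1 - p x ≤ ε` where `f x = 1`,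
and `inr x` is `p x - f x ≤ ε`. -/
abbrev Constraint := {x // x ∈ D ∧ f x = true} ⊕ {x // x ∈ D}

def Constraint.point : Constraint D f → σ → Bool := Sum.elim Subtype.val Subtype.val

def Constraint.sign : Constraint D f → ℝ := Sum.elim (fun _ => 1) (fun _ => -1)

theorem oneSidedApproxBy_iff_forall_constraint {p : MvPolynomial σ ℝ} :
    OneSidedApproxBy D f ε p ↔
      ∀ c : Constraint D f, c.sign * (bval (f c.point) - pEval p c.point) ≤ ε := by
  simp only [Sum.forall, Constraint.sign, Constraint.point, Sum.elim_inl, Sum.elim_inr,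
    Subtype.forall, and_imp]
  constructor
  · rintro ⟨h1, h0⟩
    refine ⟨fun x hx hfx => ?_, fun x hx => ?_⟩
    · simp only [hfx, bval, if_true]
      linarith [(abs_le.1 (h1 x hx hfx)).1]
    · cases hfx : f x
      · simpa [bval] using h0 x hx hfx
      · simpa [bval] using (abs_le.1 (h1 x hx hfx)).2
  · rintro ⟨h1, h0⟩
    refine ⟨fun x hx hfx => abs_le.2 ⟨?_, ?_⟩, fun x hx hfx => ?_⟩
    · have := h1 x hx hfx
      simp only [hfx, bval, if_true] at this
      linarith
    · simpa [hfx, bval] using h0 x hx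
    · simpa [hfx, bval] using h0 x hx

theorem Constraint.point_mem (c : Constraint D f) : c.point ∈ D := by
  rcases c with ⟨x, hx, -⟩ | ⟨x, hx⟩ <;> exact hx

variable [Fintype σ]

theorem exists_oneSidedApproxBy (hε : 0 ≤ ε) :
    ∃ p : MvPolynomial σ ℝ, OneSidedApproxBy D f ε p := by
  obtain ⟨p, hp⟩ := exists_pEval_eq fun x => bval (f x)
  exact ⟨p, fun x _ hfx => by simpa [hp, hfx, bval] using hε,
    fun x _ hfx => by simpa [hp, hfx, bval] using hε⟩

variable [DecidableEq σ]

variable (D f ε d) in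
def IsDualWitness (ψ : (σ → Bool) → ℝ) : Prop :=
  (∀ x, x ∉ D → ψ x = 0) ∧
  PureHighDeg d ψ ∧
  (∑ x : σ → Bool, |ψ x|) = 1 ∧
  (∑ x : σ → Bool, (if x ∈ D then ψ x * bval (f x) else 0)) > ε ∧
  (∀ x ∈ D, f x = false → ψ x ≤ 0)

theorem IsDualWitness.lt_totalDegree {ψ : (σ → Bool) → ℝ} (hψ : IsDualWitness D f ε d ψ)
    {p : MvPolynomial σ ℝ} (hp : OneSidedApproxBy D f ε p) : d < p.totalDegree := by
  obtain ⟨hD, hphd, hnorm, hcorr, hsign⟩ := hψ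
  by_contra! hdeg
  have hsum := Finset.sum_le_sum fun x (_ : x ∈ Finset.univ) =>
    sub_mul_abs_le_mul_pEval hp (hD x) (hsign x)
  rw [hphd p hdeg, Finset.sum_sub_distrib, ← Finset.mul_sum, hnorm, mul_one] at hsum
  linarith

theorem exists_isDualWitness_of_mul_sum_abs_lt {ψ : (σ → Bool) → ℝ} (hD : ∀ x, x ∉ D → ψ x = 0)
    (hphd : PureHighDeg d ψ) (hsign : ∀ x ∈ D, f x = false → ψ x ≤ 0)
    (hcorr : ε * ∑ x, |ψ x| < ∑ x, ψ x * bval (f x)) :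
    ∃ ψ', IsDualWitness D f ε d ψ' := by
  set N := ∑ x, |ψ x|
  have hN : 0 < N := by
    refine (Finset.sum_nonneg fun x _ => abs_nonneg (ψ x)).lt_of_ne fun h => ?_
    have : ψ = 0 := funext fun x => abs_eq_zero.1 ((Finset.sum_eq_zero_iff_of_nonneg
      fun x _ => abs_nonneg (ψ x)).1 h.symm x (Finset.mem_univ x))
    simp [N, this] at hcorr
  refine ⟨fun x => ψ x / N, fun x hx => by simp [hD x hx], fun p hp => ?_, ?_, ?_,
    fun x hx hfx => div_nonpos_of_nonpos_of_nonneg (hsign x hx hfx) hN.le⟩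
  · simp_rw [div_mul_eq_mul_div, ← Finset.sum_div, hphd p hp, zero_div]
  · simp only [abs_div, abs_of_pos hN]
    rw [← Finset.sum_div, div_self hN.ne']
  · have : ∀ x, (if x ∈ D then ψ x / N * bval (f x) else 0) = ψ x * bval (f x) / N := fun x => by
      by_cases hx : x ∈ D <;> simp [hx, hD, div_mul_eq_mul_div]
    simp_rw [this, ← Finset.sum_div]
    exact (lt_div_iff₀ hN).2 hcorr

def Constraint.combine (t : Constraint D f → ℝ) (x : σ → Bool) : ℝ :=
  ∑ c, if c.point = x then c.sign * t c else 0

theorem Constraint.sum_combine_mul (t : Constraint D f → ℝ) (h : (σ → Bool) → ℝ) :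
    ∑ x, combine t x * h x = ∑ c, c.sign * t c * h c.point := by
  simp only [combine, Finset.sum_mul, ite_mul, zero_mul]
  rw [Finset.sum_comm]
  simp

theorem Constraint.combine_eq_zero (t : Constraint D f → ℝ) {x : σ → Bool} (hx : x ∉ D) :
    combine t x = 0 :=
  Finset.sum_eq_zero fun c _ => if_neg fun (h : c.point = x) => hx (h ▸ c.point_mem)

theorem Constraint.combine_nonpos {t : Constraint D f → ℝ} (ht : 0 ≤ t) {x : σ → Bool}
    (hfx : f x = false) : combine t x ≤ 0 := by
  refine Finset.sum_nonpos fun c _ => ?_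
  split_ifs with h
  · rcases c with ⟨y, hy, hfy⟩ | c
    · obtain rfl : y = x := h
      simp [hfx] at hfy
    · simpa [Constraint.sign] using ht (.inr c)
  · exact le_rfl

theorem Constraint.sum_abs_combine_le {t : Constraint D f → ℝ} (ht : 0 ≤ t) :
    ∑ x, |combine t x| ≤ ∑ c, t c := by
  calc ∑ x, |combine t x| ≤ ∑ x, ∑ c, if c.point = x then t c else 0 := by
        refine Finset.sum_le_sum fun x _ => (Finset.abs_sum_le_sum_abs _ _).trans
          (Finset.sum_le_sum fun c _ => ?_)
        split_ifs
        · rcases c with c | c <;> simp [Constraint.sign, abs_of_nonneg (ht _)]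
        · simp
    _ = ∑ c, t c := by rw [Finset.sum_comm]; simp

variable (ε d) in
/-- Constraint `c` as a linear form: a separating functional `y` with `y none < 0` gives the
approximant with coefficients `y (some S) / -y none`, while a nonnegative combination of the rows
equal to `Pi.single none 1` gives an unnormalised dual witness. -/
def Constraint.row (c : Constraint D f) : Option {S : Finset σ // S.card ≤ d} → ℝ :=
  fun k => k.elim (c.sign * bval (f c.point) - ε) fun S => c.sign * pEval (∏ i ∈ S.1, X i) c.point

theorem exists_isDualWitness_of_sum_smul_row_eq (hε : 0 ≤ ε) {t : Constraint D f → ℝ}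
    (ht : 0 ≤ t) (hsum : ∑ c, t c • c.row ε d = Pi.single none 1) :
    ∃ ψ, IsDualWitness D f ε d ψ := by
  have hcoord : ∀ k, ∑ c, t c * c.row ε d k = (Pi.single none 1 : _ → ℝ) k := fun k => by
    simpa using congrFun hsum k
  refine exists_isDualWitness_of_mul_sum_abs_lt (ψ := Constraint.combine t)
    (fun x hx => Constraint.combine_eq_zero t hx) (pureHighDeg_of_forall_prod_X fun S hS => ?_)
    (fun x _ hfx => Constraint.combine_nonpos ht hfx) ?_
  · simpa [Constraint.sum_combine_mul, Constraint.row, mul_comm, mul_left_comm]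
      using hcoord (some ⟨S, hS⟩)
  · have hobj := hcoord none
    simp only [Constraint.row, Option.elim_none, Pi.single_eq_same, mul_sub,
      Finset.sum_sub_distrib, ← Finset.sum_mul] at hobj
    have hcomm : ∑ c, c.sign * t c * bval (f c.point)
        = ∑ c, t c * (c.sign * bval (f c.point)) := Finset.sum_congr rfl fun c _ => by ring
    rw [Constraint.sum_combine_mul]
    linarith [mul_le_mul_of_nonneg_left (Constraint.sum_abs_combine_le ht) hε]

theorem exists_oneSidedApproxBy_of_row_nonneg
    (φ : StrongDual ℝ (Option {S : Finset σ // S.card ≤ d} → ℝ))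
    (hφ : ∀ c : Constraint D f, 0 ≤ φ (c.row ε d)) (hφb : φ (Pi.single none 1) < 0) :
    ∃ p : MvPolynomial σ ℝ, OneSidedApproxBy D f ε p ∧ p.totalDegree ≤ d := by
  set y : Option {S : Finset σ // S.card ≤ d} → ℝ := fun k => φ fun j => if k = j then 1 else 0
  have hφ_apply : ∀ z, φ z = ∑ k, z k * y k := fun z => by
    simpa [smul_eq_mul] using φ.toLinearMap.pi_apply_eq_sum_univ z
  set a := -y none
  have ha : 0 < a := by
    rw [hφ_apply] at hφb
    simpa [a, Pi.single_apply] using hφb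
  set p : MvPolynomial σ ℝ := ∑ S, (y (some S) / a) • ∏ i ∈ S.1, X i
  have hp : ∀ x, pEval p x = (∑ S, y (some S) * pEval (∏ i ∈ S.1, X i) x) / a := fun x => by
    simp [p, pEval, smul_eval, Finset.sum_div, div_mul_eq_mul_div]
  refine ⟨p, oneSidedApproxBy_iff_forall_constraint.2 fun c => ?_,
    totalDegree_sum_smul_prod_X_le _⟩
  have hc := hφ c
  rw [hφ_apply, Fintype.sum_option] at hc
  simp only [Constraint.row, Option.elim_none, Option.elim_some, mul_assoc, ← Finset.mul_sum,
    show y none = -a by simp [a], mul_comm (pEval _ _)] at hc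
  set Q := ∑ S, y (some S) * pEval (∏ i ∈ S.1, X i) c.point
  rw [hp, show c.sign * (bval (f c.point) - Q / a)
    = (c.sign * bval (f c.point) * a - c.sign * Q) / a by field_simp, div_le_iff₀ ha]
  linarith

theorem exists_isDualWitness_of_forall_lt_totalDegree (hε : 0 ≤ ε)
    (h : ∀ p : MvPolynomial σ ℝ, OneSidedApproxBy D f ε p → d < p.totalDegree) :
    ∃ ψ, IsDualWitness D f ε d ψ := by
  by_cases hfeas : ∃ t : Constraint D f → ℝ, 0 ≤ t ∧ ∑ c, t c • c.row ε d = Pi.single none 1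
  · obtain ⟨t, ht, hsum⟩ := hfeas
    exact exists_isDualWitness_of_sum_smul_row_eq hε ht hsum
  · obtain ⟨φ, hφ, hφb⟩ := exists_strongDual_of_not_exists_nonneg_sum_eq _ hfeas
    obtain ⟨p, hp, hdeg⟩ := exists_oneSidedApproxBy_of_row_nonneg φ hφ hφb
    exact absurd (h p hp) (not_lt.2 hdeg)

end Duality

theorem stmt6 (M : ℕ) (D : Set (Fin M → Bool)) (f : (Fin M → Bool) → Bool)
    (ε : ℝ) (hε0 : 0 ≤ ε) (d : ℕ) :
    d < odeg D f ε ↔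
      ∃ ψ : (Fin M → Bool) → ℝ,
        (∀ x, x ∉ D → ψ x = 0) ∧
        PureHighDeg d ψ ∧
        (∑ x : Fin M → Bool, |ψ x|) = 1 ∧
        (∑ x : Fin M → Bool, (if x ∈ D then ψ x * bval (f x) else 0)) > ε ∧
        (∀ x ∈ D, f x = false → ψ x ≤ 0) := by
  refine ⟨fun hd => exists_isDualWitness_of_forall_lt_totalDegree hε0
    fun p hp => hd.trans_le (Nat.sInf_le ⟨p, hp, rfl⟩), fun ⟨ψ, hψ⟩ => ?_⟩
  obtain ⟨p, hp⟩ := exists_oneSidedApproxBy (D := D) (f := f) hε0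
  exact Nat.succ_le_iff.1 <| le_csInf ⟨_, p, hp, rfl⟩
    fun _ ⟨q, hq, he⟩ => he ▸ IsDualWitness.lt_totalDegree (ψ := ψ) hψ hq
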